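/- The maximal advantage over tests, η(P,Q) = sup_φ (E_Q[φ] - E_P[φ]) over measurable tests φ: O → [0,1], equals the total variation distance TV(P, Q), and equals 1 - 2α* where α* is the unique fixed point of the symmetric trade-off function, i.e., α* satisfies T(P,Q)(α*) = α* when T(P,Q) is symmetric (T(P,Q) = T(Q,P)). -/

import Mathlib

open MeasureTheory

/-- Trade-off function `T(P,Q)(α) = inf {1 - E_Q[φ] : E_P[φ] ≤ α}` over measurable
tests `φ : O → [0,1]`. -/
noncomputable def tradeoff {O : Type*} [MeasurableSpace O] (P Q : Measure O) (α : ℝ) : ℝ :=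
  sInf {β | ∃ φ : O → ℝ, Measurable φ ∧ (∀ o, 0 ≤ φ o) ∧ (∀ o, φ o ≤ 1) ∧
    (∫ o, φ o ∂P) ≤ α ∧ β = 1 - ∫ o, φ o ∂Q}

/-- Maximal advantage over measurable tests: `η(P,Q) = sup_φ (E_Q[φ] - E_P[φ])`. -/
noncomputable def advantage {O : Type*} [MeasurableSpace O] (P Q : Measure O) : ℝ :=
  sSup {x | ∃ φ : O → ℝ, Measurable φ ∧ (∀ o, 0 ≤ φ o) ∧ (∀ o, φ o ≤ 1) ∧
    x = (∫ o, φ o ∂Q) - ∫ o, φ o ∂P}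

/-- Total variation distance `TV(P,Q) = sup_E (Q(E) - P(E))`. -/
noncomputable def tvDist {O : Type*} [MeasurableSpace O] (P Q : Measure O) : ℝ :=
  sSup {x | ∃ E : Set O, MeasurableSet E ∧ x = (Q E).toReal - (P E).toReal}

/-!
For a Hahn set `s` of `Q - P` (where `P ≤ Q` on `s` and `Q ≤ P` off `s`), every test satisfies
`E_Q[φ] - E_P[φ] ≤ Q(s) - P(s)`, and the indicator of `s` attains this bound; so the advantage and
the total variation distance are both `Q(s) - P(s)`.

For the fixed point, a test `φ` with `a = E_P[φ]` and `b = 1 - E_Q[φ]` gives `T(a) ≤ b`, and its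
complement `1 - φ`, read as a test for `(Q, P)`, gives `T(Q,P)(b) ≤ a`, i.e. `T(b) ≤ a` by symmetry.
Convexity then puts `T((a + b)/2) ≤ (a + b)/2`, which for a non-increasing `T` with fixed point `α*`
forces `2α* ≤ a + b`, i.e. `E_Q[φ] - E_P[φ] ≤ 1 - 2α*`. Conversely `T(α) ≥ 1 - α - η` for all `α`,
and at `α = α*` this reads `η ≥ 1 - 2α*`.
-/

open MeasureTheory Set Function

lemma le_mul_csInf_add_mul_csInf {s t : Set ℝ} {a b c : ℝ} (hs : s.Nonempty) (hs' : BddBelow s)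
    (ht : t.Nonempty) (ht' : BddBelow t) (ha : 0 ≤ a) (hb : 0 ≤ b)
    (h : ∀ x ∈ s, ∀ y ∈ t, c ≤ a * x + b * y) : c ≤ a * sInf s + b * sInf t := by
  rw [← smul_eq_mul, ← smul_eq_mul b, ← Real.sInf_smul_of_nonneg ha,
    ← Real.sInf_smul_of_nonneg hb, ← csInf_add hs.smul_set (hs'.smul_of_nonneg ha)
      ht.smul_set (ht'.smul_of_nonneg hb)]
  refine le_csInf (hs.smul_set.add ht.smul_set) ?_
  rintro _ ⟨_, ⟨x, hx, rfl⟩, _, ⟨y, hy, rfl⟩, rfl⟩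
  exact h x hx y hy

lemma ConvexOn.two_mul_le_add_of_isFixedPt {f : ℝ → ℝ} (hconv : ConvexOn ℝ (Ici 0) f)
    (hanti : AntitoneOn f (Ici 0)) {α a b : ℝ} (hα : 0 ≤ α) (hfix : IsFixedPt f α)
    (ha : 0 ≤ a) (hb : 0 ≤ b) (hfa : f a ≤ b) (hfb : f b ≤ a) : 2 * α ≤ a + b := by
  by_contra! hlt
  have hmid : f ((a + b) / 2) ≤ (a + b) / 2 := calc
    f ((a + b) / 2) = f ((1 / 2 : ℝ) • a + (1 / 2 : ℝ) • b) := by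
      rw [smul_eq_mul, smul_eq_mul]; ring_nf
    _ ≤ (1 / 2 : ℝ) • f a + (1 / 2 : ℝ) • f b :=
      hconv.2 ha hb (by norm_num) (by norm_num) (by norm_num)
    _ ≤ (a + b) / 2 := by simp only [smul_eq_mul]; linarith
  have hfix_le : α ≤ f ((a + b) / 2) :=
    hfix ▸ hanti (by simp only [mem_Ici]; positivity) hα (by linarith)
  linarith

section Tests

variable {O : Type*} [MeasurableSpace O]

structure IsTest (φ : O → ℝ) : Prop where
  measurable : Measurable φ
  nonneg : ∀ o, 0 ≤ φ o
  le_one : ∀ o, φ o ≤ 1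

namespace IsTest

variable {φ ψ : O → ℝ}

lemma zero : IsTest (fun _ : O => (0 : ℝ)) :=
  ⟨measurable_const, fun _ => le_rfl, fun _ => zero_le_one⟩

lemma indicator_one {E : Set O} (hE : MeasurableSet E) : IsTest (E.indicator 1) :=
  ⟨measurable_one.indicator hE, indicator_nonneg fun _ _ => zero_le_one,
    indicator_le_self' fun _ _ => zero_le_one⟩

lemma one_sub (hφ : IsTest φ) : IsTest (fun o => 1 - φ o) :=
  ⟨measurable_const.sub hφ.measurable, fun o => by linarith [hφ.le_one o],
    fun o => by linarith [hφ.nonneg o]⟩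

lemma convexComb (hφ : IsTest φ) (hψ : IsTest ψ) {a b : ℝ} (ha : 0 ≤ a) (hb : 0 ≤ b)
    (hab : a + b = 1) : IsTest (fun o => a * φ o + b * ψ o) := by
  refine ⟨(hφ.measurable.const_mul a).add (hψ.measurable.const_mul b), fun o => ?_, fun o => ?_⟩
  · have := hφ.nonneg o; have := hψ.nonneg o; positivity
  · nlinarith [hφ.le_one o, hψ.le_one o]

lemma integrable (hφ : IsTest φ) (μ : Measure O) [IsFiniteMeasure μ] : Integrable φ μ :=
  (integrable_const (1 : ℝ)).mono' hφ.measurable.aestronglyMeasurable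
    (.of_forall fun o => by rw [Real.norm_eq_abs, abs_of_nonneg (hφ.nonneg o)]; exact hφ.le_one o)

lemma integral_nonneg (hφ : IsTest φ) (μ : Measure O) : 0 ≤ ∫ o, φ o ∂μ :=
  MeasureTheory.integral_nonneg hφ.nonneg

lemma integral_le_measureReal_univ (hφ : IsTest φ) (μ : Measure O) [IsFiniteMeasure μ] :
    ∫ o, φ o ∂μ ≤ μ.real univ := by
  simpa using integral_mono (hφ.integrable μ) (integrable_const 1) hφ.le_one

lemma integral_one_sub (hφ : IsTest φ) (μ : Measure O) [IsProbabilityMeasure μ] :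
    ∫ o, (1 - φ o) ∂μ = 1 - ∫ o, φ o ∂μ := by
  simp [integral_sub (integrable_const 1) (hφ.integrable μ)]

lemma integral_convexComb (hφ : IsTest φ) (hψ : IsTest ψ) (μ : Measure O) [IsFiniteMeasure μ]
    (a b : ℝ) : ∫ o, (a * φ o + b * ψ o) ∂μ = a * ∫ o, φ o ∂μ + b * ∫ o, ψ o ∂μ := by
  rw [integral_add ((hφ.integrable μ).const_mul a) ((hψ.integrable μ).const_mul b),
    integral_const_mul, integral_const_mul]

end IsTest

variable {P Q : Measure O} {φ : O → ℝ}

section Tradeoff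

def tradeoffSet (P Q : Measure O) (α : ℝ) : Set ℝ :=
  {β | ∃ φ : O → ℝ, Measurable φ ∧ (∀ o, 0 ≤ φ o) ∧ (∀ o, φ o ≤ 1) ∧
    (∫ o, φ o ∂P) ≤ α ∧ β = 1 - ∫ o, φ o ∂Q}

lemma tradeoffSet_nonempty {α : ℝ} (hα : 0 ≤ α) : (tradeoffSet P Q α).Nonempty :=
  ⟨_, _, IsTest.zero.measurable, IsTest.zero.nonneg, IsTest.zero.le_one, by simpa using hα, rfl⟩

lemma tradeoffSet_bddBelow [IsFiniteMeasure Q] (α : ℝ) : BddBelow (tradeoffSet P Q α) := by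
  refine ⟨1 - Q.real univ, ?_⟩
  rintro _ ⟨φ, hm, h0, h1, -, rfl⟩
  linarith [IsTest.integral_le_measureReal_univ ⟨hm, h0, h1⟩ Q]

lemma tradeoff_le_of_integral_le [IsFiniteMeasure Q] {α : ℝ} (hφ : IsTest φ)
    (hα : ∫ o, φ o ∂P ≤ α) : tradeoff P Q α ≤ 1 - ∫ o, φ o ∂Q :=
  csInf_le (tradeoffSet_bddBelow α) ⟨φ, hφ.measurable, hφ.nonneg, hφ.le_one, hα, rfl⟩

lemma le_tradeoff {α c : ℝ} (hα : 0 ≤ α)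
    (h : ∀ φ : O → ℝ, IsTest φ → ∫ o, φ o ∂P ≤ α → c ≤ 1 - ∫ o, φ o ∂Q) :
    c ≤ tradeoff P Q α := by
  refine le_csInf (tradeoffSet_nonempty hα) ?_
  rintro _ ⟨φ, hm, h0, h1, hφα, rfl⟩
  exact h φ ⟨hm, h0, h1⟩ hφα

lemma tradeoff_swap_le [IsProbabilityMeasure P] [IsProbabilityMeasure Q] (hφ : IsTest φ) :
    tradeoff Q P (1 - ∫ o, φ o ∂Q) ≤ ∫ o, φ o ∂P := by
  simpa [hφ.integral_one_sub] using
    tradeoff_le_of_integral_le (P := Q) (Q := P) hφ.one_sub (hφ.integral_one_sub Q).le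

variable (P Q)

lemma tradeoff_antitoneOn [IsFiniteMeasure Q] : AntitoneOn (tradeoff P Q) (Ici 0) :=
  fun _ hα _ _ hαα' => le_tradeoff hα fun _ hφ hφα =>
    tradeoff_le_of_integral_le hφ (hφα.trans hαα')

lemma tradeoff_convexOn [IsFiniteMeasure P] [IsFiniteMeasure Q] :
    ConvexOn ℝ (Ici 0) (tradeoff P Q) := by
  refine ⟨convex_Ici 0, fun x hx y hy a b ha hb hab => ?_⟩
  refine le_mul_csInf_add_mul_csInf (tradeoffSet_nonempty hx) (tradeoffSet_bddBelow x)
    (tradeoffSet_nonempty hy) (tradeoffSet_bddBelow y) ha hb ?_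
  rintro _ ⟨φ, hmφ, h0φ, h1φ, hφx, rfl⟩ _ ⟨ψ, hmψ, h0ψ, h1ψ, hψy, rfl⟩
  have hφ : IsTest φ := ⟨hmφ, h0φ, h1φ⟩
  have hψ : IsTest ψ := ⟨hmψ, h0ψ, h1ψ⟩
  calc tradeoff P Q (a • x + b • y)
      ≤ 1 - ∫ o, (a * φ o + b * ψ o) ∂Q := by
        refine tradeoff_le_of_integral_le (hφ.convexComb hψ ha hb hab) ?_
        rw [hφ.integral_convexComb hψ, smul_eq_mul, smul_eq_mul]
        gcongr
    _ = a * (1 - ∫ o, φ o ∂Q) + b * (1 - ∫ o, ψ o ∂Q) := by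
        rw [hφ.integral_convexComb hψ]; linear_combination -hab

end Tradeoff

section Advantage

lemma le_advantage [IsFiniteMeasure Q] (hφ : IsTest φ) :
    ∫ o, φ o ∂Q - ∫ o, φ o ∂P ≤ advantage P Q := by
  refine le_csSup ⟨Q.real univ, ?_⟩ ⟨φ, hφ.measurable, hφ.nonneg, hφ.le_one, rfl⟩
  rintro _ ⟨ψ, hm, h0, h1, rfl⟩
  linarith [IsTest.integral_le_measureReal_univ ⟨hm, h0, h1⟩ Q, IsTest.integral_nonneg ⟨hm, h0, h1⟩ P]

lemma advantage_le {c : ℝ} (h : ∀ φ : O → ℝ, IsTest φ → ∫ o, φ o ∂Q - ∫ o, φ o ∂P ≤ c) :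
    advantage P Q ≤ c := by
  refine csSup_le ⟨_, _, IsTest.zero.measurable, IsTest.zero.nonneg, IsTest.zero.le_one, rfl⟩ ?_
  rintro _ ⟨φ, hm, h0, h1, rfl⟩
  exact h φ ⟨hm, h0, h1⟩

lemma le_tvDist [IsFiniteMeasure Q] {E : Set O} (hE : MeasurableSet E) :
    Q.real E - P.real E ≤ tvDist P Q := by
  refine le_csSup ⟨Q.real univ, ?_⟩ ⟨E, hE, rfl⟩
  rintro _ ⟨F, -, rfl⟩
  change Q.real F - P.real F ≤ _
  linarith [measureReal_mono (μ := Q) (subset_univ F), measureReal_nonneg (μ := P) (s := F)]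

lemma tvDist_le_advantage [IsFiniteMeasure Q] :
    tvDist P Q ≤ advantage P Q := by
  refine csSup_le ⟨_, ∅, MeasurableSet.empty, rfl⟩ ?_
  rintro _ ⟨E, hE, rfl⟩
  change Q.real E - P.real E ≤ _
  simpa [integral_indicator_one hE] using le_advantage (P := P) (Q := Q) (IsTest.indicator_one hE)

lemma MeasureTheory.IsHahnDecomposition.integral_sub_integral_le [IsFiniteMeasure P]
    [IsFiniteMeasure Q] {s : Set O} (hs : IsHahnDecomposition P Q s) (hφ : IsTest φ) :
    ∫ o, φ o ∂Q - ∫ o, φ o ∂P ≤ Q.real s - P.real s := by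
  have hon : ∫ o in s, (1 - φ o) ∂P ≤ ∫ o in s, (1 - φ o) ∂Q :=
    integral_mono_measure hs.le_on (.of_forall fun o => by simp [hφ.le_one o])
      (hφ.one_sub.integrable Q).restrict
  have hoff : ∫ o in sᶜ, φ o ∂Q ≤ ∫ o in sᶜ, φ o ∂P :=
    integral_mono_measure hs.ge_on_compl (.of_forall hφ.nonneg) (hφ.integrable P).restrict
  rw [integral_sub (integrable_const 1) (hφ.integrable P).restrict,
    integral_sub (integrable_const 1) (hφ.integrable Q).restrict, setIntegral_const,
    setIntegral_const, smul_eq_mul, smul_eq_mul, mul_one, mul_one] at hon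
  rw [← integral_add_compl hs.measurableSet (hφ.integrable P),
    ← integral_add_compl hs.measurableSet (hφ.integrable Q)]
  linarith

variable (P Q)

lemma advantage_eq_tvDist [IsFiniteMeasure P] [IsFiniteMeasure Q] :
    advantage P Q = tvDist P Q := by
  obtain ⟨s, hs⟩ := exists_isHahnDecomposition P Q
  exact le_antisymm (advantage_le fun φ hφ => (hs.integral_sub_integral_le hφ).trans
    (le_tvDist hs.measurableSet)) tvDist_le_advantage

lemma one_sub_sub_advantage_le_tradeoff [IsFiniteMeasure Q] {α : ℝ} (hα : 0 ≤ α) :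
    1 - α - advantage P Q ≤ tradeoff P Q α :=
  le_tradeoff hα fun _ hφ hφα => by linarith [le_advantage (P := P) (Q := Q) hφ]

end Advantage

end Tests

/-- The maximal advantage over tests equals the total variation distance
`TV(P, Q)`, and if the trade-off function is symmetric (`T(P,Q) = T(Q,P)` on `[0,1]`)
and `α*` is a fixed point of it (`T(P,Q)(α*) = α*`, `α* ∈ [0, 1/2]`), then the
advantage equals `1 - 2α*`. -/
theorem advantage_eq_tv_and_fixed_point
    {O : Type*} [MeasurableSpace O] (P Q : Measure O)
    [IsProbabilityMeasure P] [IsProbabilityMeasure Q] :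
    advantage P Q = tvDist P Q ∧
    ((∀ α ∈ Set.Icc (0 : ℝ) 1, tradeoff P Q α = tradeoff Q P α) →
      ∀ αs ∈ Set.Icc (0 : ℝ) (1 / 2), tradeoff P Q αs = αs →
        advantage P Q = 1 - 2 * αs) := by
  refine ⟨advantage_eq_tvDist P Q, fun hsym αs hαs hfix => le_antisymm ?_ ?_⟩
  · refine advantage_le fun φ hφ => ?_
    have hb : 1 - ∫ o, φ o ∂Q ∈ Icc (0 : ℝ) 1 := by
      constructor <;> linarith [hφ.integral_nonneg Q, hφ.integral_le_measureReal_univ Q, probReal_univ (μ := Q)]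
    have := (tradeoff_convexOn P Q).two_mul_le_add_of_isFixedPt (tradeoff_antitoneOn P Q)
      hαs.1 hfix (hφ.integral_nonneg P) hb.1 (tradeoff_le_of_integral_le hφ le_rfl)
      ((hsym _ hb).trans_le (tradeoff_swap_le hφ))
    linarith
  · linarith [one_sub_sub_advantage_le_tradeoff P Q hαs.1]
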